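/- Let σ > 0 and μ = 0. Then the set of equilibria of the fully symmetric convergence–divergence game in the unit square is exactly the nine-point set {(0,0), (0,1), (1,0), (1,1), (1/2, 1/2), (1/(2+σ), 0), ((1+σ)/(2+σ), 1), (0, 1/(2+σ)), (1, (1+σ)/(2+σ))}. -/

import Mathlib

noncomputable def F1 (σ μ x y : ℝ) : ℝ :=
  ((1 - x) - μ) * x * (x + σ * x * (1 - y)) - (x - μ) * (1 - x) * ((1 - x) + σ * (1 - x) * y)

noncomputable def F2 (σ μ x y : ℝ) : ℝ :=
  ((1 - y) - μ) * y * (y + σ * y * (1 - x)) - (y - μ) * (1 - y) * ((1 - y) + σ * (1 - y) * x)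

/-!
Without mutation `F₁(x, y) = x (1 - x) ((2 + σ) x - 1 - σ y)`, and `F₂` is `F₁` with the two
populations swapped. So each coordinate is `0`, `1`, or on the line `(2 + σ) x = 1 + σ y`.
The eight choices involving a boundary value pin the point down at once; when both coordinates
are interior, subtracting the two linear equations gives `(2 + 2σ) (x - y) = 0`, so `x = y = 1/2`.
-/

theorem F2_eq_F1_swap (σ μ x y : ℝ) : F2 σ μ x y = F1 σ μ y x := rfl

theorem F1_zero_mutation (σ x y : ℝ) :
    F1 σ 0 x y = x * (1 - x) * ((2 + σ) * x - (1 + σ * y)) := by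
  unfold F1; ring

theorem F1_zero_mutation_eq_zero_iff {σ : ℝ} (hσ : 2 + σ ≠ 0) {x y : ℝ} :
    F1 σ 0 x y = 0 ↔ x = 0 ∨ x = 1 ∨ x = (1 + σ * y) / (2 + σ) := by
  rw [F1_zero_mutation, mul_eq_zero, mul_eq_zero, sub_eq_zero, sub_eq_zero, eq_div_iff hσ,
    mul_comm x, eq_comm (a := (1 : ℝ)), or_assoc]

theorem eq_half_of_eq_div_of_eq_div {σ x y : ℝ} (h₁ : 1 + σ ≠ 0) (h₂ : 2 + σ ≠ 0)
    (hx : x = (1 + σ * y) / (2 + σ)) (hy : y = (1 + σ * x) / (2 + σ)) :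
    x = 1 / 2 ∧ y = 1 / 2 := by
  rw [eq_div_iff h₂] at hx hy
  have hxy : x = y := by
    have : (2 * (1 + σ)) * (x - y) = 0 := by linear_combination hx - hy
    simpa [h₁, sub_eq_zero] using this
  subst hxy
  constructor <;> linarith

theorem div_two_add_mem_Icc {σ a : ℝ} (ha₀ : 0 ≤ a) (ha₁ : a ≤ 1 + σ) :
    a / (2 + σ) ∈ Set.Icc (0 : ℝ) 1 :=
  ⟨by apply div_nonneg <;> linarith, (div_le_one (by linarith)).2 (by linarith)⟩

theorem zero_mutation_equilibria (σ : ℝ) (hσ : 0 < σ) :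
    {p : ℝ × ℝ | p ∈ Set.Icc (0:ℝ) 1 ×ˢ Set.Icc (0:ℝ) 1 ∧
        F1 σ 0 p.1 p.2 = 0 ∧ F2 σ 0 p.1 p.2 = 0} =
      {(0, 0), (0, 1), (1, 0), (1, 1), (1/2, 1/2),
       (1 / (2 + σ), 0), ((1 + σ) / (2 + σ), 1),
       (0, 1 / (2 + σ)), (1, (1 + σ) / (2 + σ))} := by
  have h₁ : 1 + σ ≠ 0 := by positivity
  have h₂ : 2 + σ ≠ 0 := by positivity
  ext ⟨x, y⟩
  simp only [Set.mem_ofPred_eq, Set.mem_prod, F2_eq_F1_swap, F1_zero_mutation_eq_zero_iff h₂,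
    Set.mem_insert_iff, Set.mem_singleton_iff, Prod.mk.injEq]
  constructor
  · rintro ⟨-, hx, hy⟩
    rcases hx with rfl | rfl | hx <;> rcases hy with rfl | rfl | hy
    case inr.inr.inr.inr =>
      exact .inr <| .inr <| .inr <| .inr <| .inl <| eq_half_of_eq_div_of_eq_div h₁ h₂ hx hy
    all_goals simp_all
  · rintro (⟨rfl, rfl⟩ | ⟨rfl, rfl⟩ | ⟨rfl, rfl⟩ | ⟨rfl, rfl⟩ | ⟨rfl, rfl⟩ |
      ⟨rfl, rfl⟩ | ⟨rfl, rfl⟩ | ⟨rfl, rfl⟩ | ⟨rfl, rfl⟩)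
    all_goals refine ⟨⟨?_, ?_⟩, ?_, ?_⟩
    all_goals first
      | exact div_two_add_mem_Icc (by linarith) (by linarith)
      | (norm_num; done)
      | (norm_num; field_simp)
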